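/- arXiv:2004.13210 — 4 statements merged into one kernel-verified Lean document; each statement's English description precedes it below -/
import Mathlib

section
/- For every polynomial F ∈ ℂ[z_1,…,z_N] that is symmetric under all permutations of the variables z_2,…,z_N, the following identity holds in K: Y_1^∘ F = x_{12}∘x_{13}∘⋯∘x_{1N} F = A_1·F + Σ_{j=2}^{N} A_j · ((t−1)·z_j/(t·z_j − z_1)) · (s_{1j} F), where A_j := ∏_{k≠j} a_{jk}. -/
open scoped BigOperators

noncomputable section

namespace Stmt6

open MvPolynomial

/-- The polynomial ring `ℂ[z₀, z₁, z₂, …]`; only the variables `z_1, …, z_N` are used. -/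
abbrev R : Type := MvPolynomial ℕ ℂ

/-- The field `K` of rational functions in the variables. -/
abbrev K : Type := FractionRing R

/-- The variable `z_i` as an element of `K`. -/
def Z (i : ℕ) : K := algebraMap R K (X i)

/-- A complex constant as an element of `K`. -/
def cc (c : ℂ) : K := algebraMap R K (C c)

/-- Lift an injective ring endomorphism of `R` to `K`. -/
def liftRingHom (f : R →+* R) (hf : Function.Injective f) : K →+* K :=
  IsFractionRing.lift (g := (algebraMap R K).comp f)
    (by
      rw [RingHom.coe_comp]
      exact (IsFractionRing.injective R K).comp hf)

/-- The automorphism `s_{ij}` of `K` interchanging `z_i` and `z_j` (and fixing the other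
variables). -/
def swapK (i j : ℕ) : K →+* K :=
  liftRingHom (rename (Equiv.swap i j)).toRingHom
    (rename_injective _ (Equiv.swap i j).injective)

/-- The algebra endomorphism of `R` with `z_i ↦ c·z_i`, fixing the other variables. -/
def scaleHom (c : ℂ) (i : ℕ) : R →ₐ[ℂ] R :=
  aeval fun k => if k = i then C c * X k else X k

lemma scaleHom_comp (c : ℂ) (hc : c ≠ 0) (i : ℕ) :
    (scaleHom c⁻¹ i).comp (scaleHom c i) = AlgHom.id ℂ R := by
  apply algHom_ext
  intro k
  by_cases h : k = i
  · subst h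
    simp only [scaleHom, AlgHom.coe_comp, Function.comp_apply, aeval_X, if_pos, map_mul,
      aeval_C, AlgHom.coe_id, id_eq, algebraMap_eq]
    rw [← mul_assoc, ← C_mul, mul_inv_cancel₀ hc, C_1, one_mul]
  · simp [scaleHom, h]

lemma scaleHom_injective (c : ℂ) (hc : c ≠ 0) (i : ℕ) :
    Function.Injective (scaleHom c i) := by
  intro p p' hpp'
  have h1 := DFunLike.congr_fun (scaleHom_comp c hc i) p
  have h2 := DFunLike.congr_fun (scaleHom_comp c hc i) p'
  simp only [AlgHom.coe_comp, Function.comp_apply, AlgHom.coe_id, id_eq] at h1 h2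
  rw [← h1, ← h2, hpp']

/-- The automorphism `ĉ_i : z_i ↦ c·z_i` of `K` (defined as the identity when `c = 0`). -/
def scaleK (c : ℂ) (i : ℕ) : K →+* K :=
  if hc : c = 0 then RingHom.id K
  else liftRingHom (scaleHom c i).toRingHom (scaleHom_injective c hc i)

/-- `a_{ij} = v⁻¹·(t·z_i − z_j)/(z_i − z_j)` where `t = v²`. -/
def aa (v : ℂ) (i j : ℕ) : K := cc v⁻¹ * (cc (v ^ 2) * Z i - Z j) / (Z i - Z j)

/-- `b_{ij} = −v⁻¹·(t − 1)·z_j/(z_i − z_j)` where `t = v²`. -/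
def bb (v : ℂ) (i j : ℕ) : K := -(cc v⁻¹ * (cc (v ^ 2) - 1) * Z j) / (Z i - Z j)

/-- The operator `x_{ij}` (for `i < j`: `a_{ij} + b_{ij}·s_{ij}`; for `i > j`:
`a_{ij} − b_{ji}·s_{ij}`). -/
def xop (v : ℂ) (i j : ℕ) : K → K := fun p =>
  if i < j then aa v i j * p + bb v i j * swapK i j p
  else aa v i j * p - bb v j i * swapK i j p

/-- Composition of a list of operators (the head of the list acts last). -/
def compList {α : Type*} (l : List (α → α)) : α → α := l.foldr (· ∘ ·) id

/-- The q-deformed Dunkl–Cherednik operator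
`Y_i = x_{i,i+1}∘⋯∘x_{i,N}∘ q̂_i ∘ x_{i,1}∘⋯∘x_{i,i−1}` in the variables `z_1, …, z_N`,
with parameters `v` (so `t = v²`) and `q`. -/
def Yop (v q : ℂ) (N i : ℕ) : K → K :=
  compList ((List.range' (i + 1) (N - i)).map fun j => xop v i j) ∘
    ⇑(scaleK q i) ∘
      compList ((List.range' 1 (i - 1)).map fun j => xop v i j)

/-!
Write `G_S := (∏_{k∈S} a_{1k})·F + Σ_{j∈S} b_{1j}(∏_{k∈S∖j} a_{jk})·s_{1j}F`. For `m ∉ S` and `F`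
symmetric in the variables indexed by `S ∪ {m}`, `s_{1m}s_{1j}F = s_{1j}s_{jm}F = s_{1j}F`, so
`x_{1m} G_S = a_{1m} G_S + b_{1m} s_{1m} G_S` again has this shape, and the rational identity
`b_{1j}a_{jm} = a_{1m}b_{1j} + b_{1m}b_{mj}` shows that it is `G_{S∪{m}}`. Hence
`x_{12}∘⋯∘x_{1N} F = G_{{2,…,N}}`, and `b_{1j} = a_{j1}·(t−1)z_j/(t z_j − z_1)` gives the claim.
-/

lemma Z_sub_Z_ne_zero {i j : ℕ} (h : i ≠ j) : Z i - Z j ≠ 0 := by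
  rw [Z, Z, ← map_sub, map_ne_zero_iff _ (IsFractionRing.injective R K), sub_ne_zero]
  exact (X_injective (σ := ℕ) (R := ℂ)).ne h

lemma cc_mul_Z_sub_Z_ne_zero (c : ℂ) {i j : ℕ} (h : i ≠ j) : cc c * Z i - Z j ≠ 0 := by
  rw [Z, Z, cc, ← map_mul, ← map_sub, map_ne_zero_iff _ (IsFractionRing.injective R K)]
  intro hc
  have := congrArg (coeff (Finsupp.single j 1)) hc
  rw [coeff_sub, coeff_C_mul, coeff_X, coeff_X, if_pos rfl, if_neg] at this
  · norm_num at this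
  · simp [Finsupp.single_eq_single_iff, h]

lemma swapK_algebraMap (i j : ℕ) (p : R) :
    swapK i j (algebraMap R K p) = algebraMap R K (rename (Equiv.swap i j) p) := by
  rw [swapK, liftRingHom]
  exact IsFractionRing.lift_algebraMap _ p

lemma swapK_Z (i j k : ℕ) : swapK i j (Z k) = Z (Equiv.swap i j k) := by
  rw [Z, swapK_algebraMap, rename_X, Z]

lemma swapK_cc (i j : ℕ) (c : ℂ) : swapK i j (cc c) = cc c := by
  rw [cc, swapK_algebraMap, rename_C]

lemma swapK_aa (p q : ℕ) (v : ℂ) (i j : ℕ) :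
    swapK p q (aa v i j) = aa v (Equiv.swap p q i) (Equiv.swap p q j) := by
  simp only [aa, map_div₀, map_sub, map_mul, swapK_cc, swapK_Z]

lemma swapK_bb (p q : ℕ) (v : ℂ) (i j : ℕ) :
    swapK p q (bb v i j) = bb v (Equiv.swap p q i) (Equiv.swap p q j) := by
  simp only [bb, map_div₀, map_sub, map_mul, map_neg, map_one, swapK_cc, swapK_Z]

lemma bb_mul_aa {i m j : ℕ} (v : ℂ) (him : i ≠ m) (hij : i ≠ j) (hmj : m ≠ j) :
    bb v i j * aa v j m = aa v i m * bb v i j + bb v i m * bb v m j := by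
  have := Z_sub_Z_ne_zero him
  have := Z_sub_Z_ne_zero hij
  have := Z_sub_Z_ne_zero hmj
  have := Z_sub_Z_ne_zero hmj.symm
  rw [aa, aa, bb, bb, bb]
  field_simp
  ring

lemma aa_mul_eq_bb {i j : ℕ} (v : ℂ) (hij : i ≠ j) :
    aa v j i * ((cc (v ^ 2) - 1) * Z j / (cc (v ^ 2) * Z j - Z i)) = bb v i j := by
  have := Z_sub_Z_ne_zero hij
  have := Z_sub_Z_ne_zero hij.symm
  have := cc_mul_Z_sub_Z_ne_zero (v ^ 2) hij.symm
  rw [aa, bb]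
  field_simp
  ring

lemma rename_swap_rename_swap {i j m : ℕ} (him : i ≠ m) (hjm : j ≠ m) (F : R)
    (hF : rename (Equiv.swap j m) F = F) :
    rename (Equiv.swap i m) (rename (Equiv.swap i j) F) = rename (Equiv.swap i j) F := by
  have hperm : Equiv.swap i m * Equiv.swap i j = Equiv.swap i j * Equiv.swap j m :=
    Equiv.ext fun x => by
      simp only [Equiv.Perm.coe_mul, Function.comp_apply, Equiv.swap_apply_def]
      split_ifs <;> omega
  rw [rename_rename, ← Equiv.Perm.coe_mul, hperm, Equiv.Perm.coe_mul, ← rename_rename, hF]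

def dunklExpansion (v : ℂ) (i : ℕ) (S : Finset ℕ) (F : R) : K :=
  (∏ k ∈ S, aa v i k) * algebraMap R K F +
    ∑ j ∈ S, (bb v i j * ∏ k ∈ S.erase j, aa v j k) * swapK i j (algebraMap R K F)

lemma swapK_dunklExpansion {v : ℂ} {i m : ℕ} {S : Finset ℕ} {F : R} (him : i ≠ m)
    (hi : i ∉ S) (hm : m ∉ S) (hF : ∀ j ∈ S, rename (Equiv.swap j m) F = F) :
    swapK i m (dunklExpansion v i S F) =
      (∏ k ∈ S, aa v m k) * swapK i m (algebraMap R K F) +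
        ∑ j ∈ S, (bb v m j * ∏ k ∈ S.erase j, aa v j k) * swapK i j (algebraMap R K F) := by
  have hne : ∀ k ∈ S, k ≠ i ∧ k ≠ m := fun k hk => ⟨ne_of_mem_of_not_mem hk hi,
    ne_of_mem_of_not_mem hk hm⟩
  simp only [dunklExpansion, map_add, map_mul, map_sum, map_prod, swapK_aa, swapK_bb,
    Equiv.swap_apply_left]
  congr 1
  · refine congrArg (· * _) (Finset.prod_congr rfl fun k hk => ?_)
    rw [Equiv.swap_apply_of_ne_of_ne (hne k hk).1 (hne k hk).2]
  · refine Finset.sum_congr rfl fun j hj => ?_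
    rw [Equiv.swap_apply_of_ne_of_ne (hne j hj).1 (hne j hj).2, swapK_algebraMap,
      swapK_algebraMap, rename_swap_rename_swap him (hne j hj).2 F (hF j hj)]
    congr 2
    refine Finset.prod_congr rfl fun k hk => ?_
    have hk := hne k (Finset.mem_of_mem_erase hk)
    rw [Equiv.swap_apply_of_ne_of_ne hk.1 hk.2]

lemma xop_dunklExpansion {v : ℂ} {i m : ℕ} {S : Finset ℕ} {F : R} (him : i < m)
    (hi : i ∉ S) (hm : m ∉ S) (hF : ∀ j ∈ S, rename (Equiv.swap j m) F = F) :
    xop v i m (dunklExpansion v i S F) = dunklExpansion v i (insert m S) F := by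
  have hsum : ∀ j ∈ S,
      (bb v i j * ∏ k ∈ (insert m S).erase j, aa v j k) * swapK i j (algebraMap R K F) =
        aa v i m * ((bb v i j * ∏ k ∈ S.erase j, aa v j k) * swapK i j (algebraMap R K F)) +
          bb v i m * ((bb v m j * ∏ k ∈ S.erase j, aa v j k) *
            swapK i j (algebraMap R K F)) := by
    intro j hj
    have hmj : m ≠ j := (ne_of_mem_of_not_mem hj hm).symm
    rw [Finset.erase_insert_of_ne hmj,
      Finset.prod_insert fun h => hm (Finset.mem_of_mem_erase h),
      ← mul_assoc, bb_mul_aa v him.ne (ne_of_mem_of_not_mem hj hi).symm hmj]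
    ring
  rw [xop, if_pos him, swapK_dunklExpansion him.ne hi hm hF, dunklExpansion, dunklExpansion,
    Finset.prod_insert hm, Finset.sum_insert hm, Finset.erase_insert hm,
    Finset.sum_congr rfl hsum, Finset.sum_add_distrib, ← Finset.mul_sum, ← Finset.mul_sum]
  ring

lemma dunklExpansion_eq {v : ℂ} {i : ℕ} {S : Finset ℕ} (F : R) (hi : i ∉ S) :
    dunklExpansion v i S F = (∏ k ∈ S, aa v i k) * algebraMap R K F +
      ∑ j ∈ S, (∏ k ∈ (insert i S).erase j, aa v j k) *
        ((cc (v ^ 2) - 1) * Z j / (cc (v ^ 2) * Z j - Z i)) * swapK i j (algebraMap R K F) := by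
  refine congrArg _ (Finset.sum_congr rfl fun j hj => ?_)
  have hij : i ≠ j := (ne_of_mem_of_not_mem hj hi).symm
  rw [Finset.erase_insert_of_ne hij, Finset.prod_insert fun h => hi (Finset.mem_of_mem_erase h),
    ← aa_mul_eq_bb v hij]
  ring

theorem compList_map_xop (v : ℂ) (i : ℕ) (F : R) {l : List ℕ} (hl : l.Nodup)
    (hi : ∀ j ∈ l, i < j) (hF : ∀ j ∈ l, ∀ k ∈ l, rename (Equiv.swap j k) F = F) :
    compList (l.map (xop v i)) (algebraMap R K F) = dunklExpansion v i l.toFinset F := by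
  induction l with
  | nil => simp [compList, dunklExpansion]
  | cons m l ih =>
    obtain ⟨hml, hl⟩ := List.nodup_cons.mp hl
    have hil : i ∉ l := fun h => (hi i (List.mem_cons_of_mem m h)).false
    rw [List.toFinset_cons, ← xop_dunklExpansion (hi m List.mem_cons_self)
      (List.mem_toFinset.not.mpr hil) (List.mem_toFinset.not.mpr hml)
      fun j hj => hF j (List.mem_cons_of_mem m (List.mem_toFinset.mp hj)) m List.mem_cons_self,
      ← ih hl (fun j hj => hi j (List.mem_cons_of_mem m hj))
        fun j hj k hk => hF j (List.mem_cons_of_mem m hj) k (List.mem_cons_of_mem m hk)]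
    rfl

theorem Y1_classical_simplification_general (N : ℕ) (v : ℂ) (F : R)
    (hsym : ∀ i j : ℕ, 2 ≤ i → i ≤ N → 2 ≤ j → j ≤ N → rename (Equiv.swap i j) F = F) :
    compList ((List.range' 2 (N - 1)).map fun j => xop v 1 j) (algebraMap R K F)
      = (∏ k ∈ (Finset.Icc 1 N).erase 1, aa v 1 k) * algebraMap R K F
        + ∑ j ∈ Finset.Icc 2 N,
            (∏ k ∈ (Finset.Icc 1 N).erase j, aa v j k) *
              ((cc (v ^ 2) - 1) * Z j / (cc (v ^ 2) * Z j - Z 1)) *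
                swapK 1 j (algebraMap R K F) := by
  have hrange : ∀ j, j ∈ List.range' 2 (N - 1) ↔ 2 ≤ j ∧ j ≤ N := fun j => by
    rw [List.mem_range'_1]
    omega
  have hIcc : (List.range' 2 (N - 1)).toFinset = Finset.Icc 2 N := by
    ext j
    rw [List.mem_toFinset, hrange, Finset.mem_Icc]
  rw [compList_map_xop v 1 F List.nodup_range' (fun j hj => ((hrange j).mp hj).1)
    fun j hj k hk => hsym j k ((hrange j).mp hj).1 ((hrange j).mp hj).2 ((hrange k).mp hk).1
      ((hrange k).mp hk).2, hIcc, dunklExpansion_eq F (by simp), Finset.Icc_erase_left,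
    ← Finset.Icc_add_one_left_eq_Ioc]
  refine congrArg _ (Finset.sum_congr rfl fun j hj => ?_)
  rw [← Finset.insert_Icc_add_one_left_eq_Icc (by grind : 1 ≤ N)]
  rfl

/-- On polynomials symmetric in `z_2, …, z_N`, the classical Dunkl–Cherednik
operator `Y_1^∘ = x_{12}∘⋯∘x_{1N}` simplifies to
`A_1 + Σ_{j=2}^N A_j·((t−1)z_j/(t·z_j − z_1))·s_{1j}`, where `A_j = ∏_{k ≠ j} a_{jk}`. -/
theorem Y1_classical_simplification (N : ℕ) (v : ℂ) (hv : v ≠ 0) (F : R)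
    (hvars : ∀ k ∈ F.vars, 1 ≤ k ∧ k ≤ N)
    (hsym : ∀ i j : ℕ, 2 ≤ i → i ≤ N → 2 ≤ j → j ≤ N → rename (Equiv.swap i j) F = F) :
    compList ((List.range' 2 (N - 1)).map fun j => xop v 1 j) (algebraMap R K F)
      = (∏ k ∈ (Finset.Icc 1 N).erase 1, aa v 1 k) * algebraMap R K F
        + ∑ j ∈ Finset.Icc 2 N,
            (∏ k ∈ (Finset.Icc 1 N).erase j, aa v j k) *
              ((cc (v ^ 2) - 1) * Z j / (cc (v ^ 2) * Z j - Z 1)) *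
                swapK 1 j (algebraMap R K F) :=
  Y1_classical_simplification_general N v F hsym

end Stmt6
end
end

section
/- Let q ∈ ℂ satisfy q ≠ 0 and q^{2k} ≠ 1 for all 1 ≤ k ≤ N. Then for every integer n with 0 ≤ n ≤ N: Σ_{s=1}^{N} (−1)^{s−1} · [N choose N−s]_q · q^{s(N−n)} · [s·n]_q/[s]_q = n (as a complex number). (This expresses that the N-th spin-chain eigenvalue ε_N(n) vanishes identically.) -/
/-! Since `[s n]_q / [s]_q = Σ_{j<n} q^{s(n-1-2j)}`, exchanging the two sums makes each `j < n`
contribute `1 - Σ_{s=0}^N (-1)^s [N choose s]_q x^s` with `x = q^{N-1-2j}`. By the q-binomial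
theorem this alternating sum is `∏_{k<N} (1 - q^{2k-N+1} x)`, whose factor `k = j` vanishes, so
every `j < n` contributes exactly `1`. -/

open scoped BigOperators

noncomputable section

namespace Stmt14

/-- The symmetric q-integer `[n]_q = (qⁿ − q⁻ⁿ)/(q − q⁻¹)`. -/
def qint (q : ℂ) (n : ℕ) : ℂ := (q ^ n - q⁻¹ ^ n) / (q - q⁻¹)

/-- The q-factorial `[n]_q! = [n]_q · [n−1]_q ⋯ [1]_q` (with `[0]_q! = 1`). -/
def qfact (q : ℂ) : ℕ → ℂ
  | 0 => 1
  | n + 1 => qint q (n + 1) * qfact q n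

/-- The q-binomial coefficient `[n choose r]_q = [n]_q!/([r]_q!·[n−r]_q!)`. -/
def qbinom (q : ℂ) (n r : ℕ) : ℂ := qfact q n / (qfact q r * qfact q (n - r))

open Finset

variable {q : ℂ}

lemma sub_inv_ne_zero {K : Type*} [DivisionRing K] {x : K} (hx : x ≠ 0) (h : x ^ 2 ≠ 1) :
    x - x⁻¹ ≠ 0 := by
  rw [sub_ne_zero]
  intro hxx
  exact h (by rw [sq]; nth_rw 2 [hxx]; exact mul_inv_cancel₀ hx)

lemma qint_ne_zero (hq0 : q ≠ 0) {k : ℕ} (hk : q ^ (2 * k) ≠ 1) : qint q k ≠ 0 := by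
  have hsq : q ^ 2 ≠ 1 := fun h => hk (by rw [pow_mul, h, one_pow])
  rw [qint, inv_pow]
  exact div_ne_zero (sub_inv_ne_zero (pow_ne_zero k hq0) (by rwa [← pow_mul, mul_comm]))
    (sub_inv_ne_zero hq0 hsq)

lemma qfact_ne_zero (hq0 : q ≠ 0) {N : ℕ} (hq : ∀ k, 1 ≤ k → k ≤ N → q ^ (2 * k) ≠ 1) :
    ∀ k ≤ N, qfact q k ≠ 0
  | 0, _ => one_ne_zero
  | k + 1, hk => mul_ne_zero (qint_ne_zero hq0 (hq (k + 1) (Nat.le_add_left 1 k) hk))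
      (qfact_ne_zero hq0 hq k (Nat.le_of_succ_le hk))

lemma qbinom_symm {N s : ℕ} (h : s ≤ N) : qbinom q N (N - s) = qbinom q N s := by
  rw [qbinom, qbinom, Nat.sub_sub_self h, mul_comm]

lemma qbinom_zero_right {N : ℕ} (h : qfact q N ≠ 0) : qbinom q N 0 = 1 := by
  simp [qbinom, qfact, h]

lemma qbinom_self {N : ℕ} (h : qfact q N ≠ 0) : qbinom q N N = 1 := by
  simp [qbinom, qfact, h]

lemma qint_add (a b : ℕ) : qint q (a + b) = q ^ a * qint q b + q⁻¹ ^ b * qint q a := by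
  simp only [qint, pow_add]
  ring

lemma qbinom_succ_succ (hq0 : q ≠ 0) {M s : ℕ} (hq : ∀ k, 1 ≤ k → k ≤ M → q ^ (2 * k) ≠ 1)
    (hs : s < M) :
    qbinom q (M + 1) (s + 1) = q ^ (s + 1) * qbinom q M (s + 1) + q⁻¹ ^ (M - s) * qbinom q M s := by
  obtain ⟨b, rfl⟩ : ∃ b, M = s + b + 1 := ⟨M - s - 1, by omega⟩
  have hF := qfact_ne_zero hq0 hq
  have hIs := qint_ne_zero hq0 (hq (s + 1) (by omega) (by omega))
  have hIb := qint_ne_zero hq0 (hq (b + 1) (by omega) (by omega))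
  have hFs := hF s (by omega)
  have hFb := hF b (by omega)
  simp only [qbinom, show s + b + 1 + 1 - (s + 1) = b + 1 by omega,
    show s + b + 1 - (s + 1) = b by omega, show s + b + 1 - s = b + 1 by omega, qfact]
  rw [show s + b + 1 + 1 = (s + 1) + (b + 1) by omega, qint_add]
  field_simp

lemma sub_inv_mul_sum_zpow {K : Type*} [Field K] {x : K} (hx : x ≠ 0) (n : ℕ) :
    (x - x⁻¹) * ∑ j ∈ range n, x ^ ((n : ℤ) - 1 - 2 * j) = x ^ n - x⁻¹ ^ n := by
  have telescope : ∀ j ∈ range n, (x - x⁻¹) * x ^ ((n : ℤ) - 1 - 2 * j)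
      = x ^ ((n : ℤ) - 2 * j) - x ^ ((n : ℤ) - 2 * (j + 1 : ℕ)) := by
    intro j _
    rw [sub_mul, ← zpow_one_add₀ hx, ← zpow_neg_one, ← zpow_add₀ hx]
    push_cast
    ring_nf
  rw [mul_sum, sum_congr rfl telescope,
    sum_range_sub' (fun j => x ^ ((n : ℤ) - 2 * j))]
  simp only [Nat.cast_zero, mul_zero, sub_zero, zpow_natCast, inv_pow]
  rw [← zpow_natCast, ← zpow_neg]
  ring_nf

lemma qint_mul (hq0 : q ≠ 0) (s n : ℕ) :
    qint q (s * n) = qint q s * ∑ j ∈ range n, (q ^ s) ^ ((n : ℤ) - 1 - 2 * j) := by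
  have h := sub_inv_mul_sum_zpow (pow_ne_zero s hq0) n
  rw [← inv_pow, ← pow_mul, ← pow_mul] at h
  rw [qint, qint, div_mul_eq_mul_div, ← h]

def altQbinomSum (q : ℂ) (M : ℕ) (t : ℂ) : ℂ :=
  ∑ s ∈ range (M + 1), (-1) ^ s * qbinom q M s * t ^ s

lemma altQbinomSum_succ (hq0 : q ≠ 0) {M : ℕ} (hq : ∀ k, 1 ≤ k → k ≤ M + 1 → q ^ (2 * k) ≠ 1)
    (t : ℂ) : altQbinomSum q (M + 1) t = (1 - q⁻¹ ^ M * t) * altQbinomSum q M (q * t) := by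
  have hF := qfact_ne_zero hq0 hq
  have pascal : ∀ s ∈ range M,
      (-1 : ℂ) ^ (s + 1) * qbinom q (M + 1) (s + 1) * t ^ (s + 1)
        = (-1) ^ (s + 1) * qbinom q M (s + 1) * (q * t) ^ (s + 1)
          - q⁻¹ ^ M * t * ((-1) ^ s * qbinom q M s * (q * t) ^ s) := by
    intro s hs
    have hsM := mem_range.mp hs
    rw [qbinom_succ_succ hq0 (fun k h1 h2 => hq k h1 (by omega)) hsM,
      pow_sub₀ _ (inv_ne_zero hq0) hsM.le, inv_pow, inv_pow, inv_inv]
    ring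
  have hsucc := sum_range_succ' (fun s => (-1 : ℂ) ^ s * qbinom q M s * (q * t) ^ s) M
  have hlast := sum_range_succ (fun s => (-1 : ℂ) ^ s * qbinom q M s * (q * t) ^ s) M
  simp only [altQbinomSum]
  rw [sum_range_succ', sum_range_succ, sum_congr rfl pascal,
    sum_sub_distrib, ← mul_sum]
  simp only [qbinom_zero_right (hF _ le_rfl), qbinom_zero_right (hF M M.le_succ),
    qbinom_self (hF _ le_rfl), qbinom_self (hF M M.le_succ)] at hsucc hlast ⊢
  have hqM : q⁻¹ ^ M * q ^ M = 1 := by rw [inv_pow, inv_mul_cancel₀ (pow_ne_zero M hq0)]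
  linear_combination -hsucc + q⁻¹ ^ M * t * hlast + (-1) ^ M * t ^ (M + 1) * hqM

theorem altQbinomSum_eq_prod (hq0 : q ≠ 0) :
    ∀ {M : ℕ}, (∀ k, 1 ≤ k → k ≤ M → q ^ (2 * k) ≠ 1) → ∀ t : ℂ,
      altQbinomSum q M t = ∏ k ∈ range M, (1 - q ^ (2 * (k : ℤ) - M + 1) * t)
  | 0, _, t => by simp [altQbinomSum, qbinom, qfact]
  | M + 1, hq, t => by
    rw [altQbinomSum_succ hq0 hq, altQbinomSum_eq_prod hq0 (fun k h1 h2 => hq k h1 (by omega)),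
      prod_range_succ', mul_comm]
    congr 1
    · refine prod_congr rfl fun k _ => ?_
      rw [← mul_assoc, ← zpow_add_one₀ hq0]
      push_cast
      ring_nf
    · rw [inv_pow, ← zpow_natCast, ← zpow_neg]
      push_cast
      ring_nf

lemma altQbinomSum_eq_zero (hq0 : q ≠ 0) {M : ℕ} (hq : ∀ k, 1 ≤ k → k ≤ M → q ^ (2 * k) ≠ 1)
    {j : ℕ} (hj : j < M) : altQbinomSum q M (q ^ ((M : ℤ) - 1 - 2 * j)) = 0 := by
  rw [altQbinomSum_eq_prod hq0 hq]
  refine prod_eq_zero (mem_range.mpr hj) ?_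
  rw [← zpow_add₀ hq0]
  ring_nf
  simp

lemma sum_Icc_qbinom_eq_one_sub {N : ℕ} (h : qfact q N ≠ 0) (t : ℂ) :
    ∑ s ∈ Icc 1 N, (-1 : ℂ) ^ (s - 1) * qbinom q N s * t ^ s = 1 - altQbinomSum q N t := by
  rw [altQbinomSum, sum_range_eq_add_Ico _ N.add_one_pos, Ico_add_one_right_eq_Icc,
    qbinom_zero_right h, sub_add_eq_sub_sub, pow_zero, pow_zero, one_mul, mul_one, sub_self,
    zero_sub, ← sum_neg_distrib]
  refine sum_congr rfl fun s hs => ?_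
  obtain ⟨k, rfl⟩ := Nat.exists_eq_add_of_le' (mem_Icc.mp hs).1
  rw [Nat.add_sub_cancel, pow_succ]
  ring

lemma pow_mul_qint_div_qint (hq0 : q ≠ 0) {N n s : ℕ} (hs : qint q s ≠ 0) (hn : n ≤ N) :
    q ^ (s * (N - n)) * (qint q (s * n) / qint q s)
      = ∑ j ∈ range n, (q ^ ((N : ℤ) - 1 - 2 * j)) ^ s := by
  rw [qint_mul hq0, mul_div_cancel_left₀ _ hs, mul_sum]
  refine sum_congr rfl fun j _ => ?_
  simp only [← zpow_natCast, ← zpow_mul, ← zpow_add₀ hq0]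
  push_cast [Nat.cast_sub hn]
  ring_nf

theorem epsilon_N_vanishes_general (N : ℕ) (q : ℂ) (hq0 : q ≠ 0)
    (hq : ∀ k, 1 ≤ k → k ≤ N → q ^ (2 * k) ≠ 1) (n : ℕ) (hn : n ≤ N) :
    ∑ s ∈ Finset.Icc 1 N,
        (-1 : ℂ) ^ (s - 1) * qbinom q N (N - s) * q ^ (s * (N - n)) *
          (qint q (s * n) / qint q s)
      = (n : ℂ) := by
  calc _ = ∑ s ∈ Icc 1 N, ∑ j ∈ range n,
        (-1 : ℂ) ^ (s - 1) * qbinom q N s * (q ^ ((N : ℤ) - 1 - 2 * j)) ^ s := by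
        refine sum_congr rfl fun s hs => ?_
        obtain ⟨hs1, hsN⟩ := mem_Icc.mp hs
        rw [mul_assoc, pow_mul_qint_div_qint hq0 (qint_ne_zero hq0 (hq s hs1 hsN)) hn,
          qbinom_symm hsN, mul_sum]
    _ = ∑ j ∈ range n, 1 := by
        rw [sum_comm]
        refine sum_congr rfl fun j hj => ?_
        have hjN : j < N := (mem_range.mp hj).trans_le hn
        rw [sum_Icc_qbinom_eq_one_sub (qfact_ne_zero hq0 hq N le_rfl),
          altQbinomSum_eq_zero hq0 hq hjN, sub_zero]
    _ = n := by simp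

/-- The `N`-th spin-chain eigenvalue `ε_N(n)` vanishes identically:
`Σ_{s=1}^{N} (−1)^{s−1}·[N choose N−s]_q·q^{s(N−n)}·[s·n]_q/[s]_q = n` for `0 ≤ n ≤ N`. -/
theorem epsilon_N_vanishes (N : ℕ) (hN : 0 < N) (q : ℂ) (hq0 : q ≠ 0)
    (hq : ∀ k, 1 ≤ k → k ≤ N → q ^ (2 * k) ≠ 1) (n : ℕ) (hn : n ≤ N) :
    ∑ s ∈ Finset.Icc 1 N,
        (-1 : ℂ) ^ (s - 1) * qbinom q N (N - s) * q ^ (s * (N - n)) *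
          (qint q (s * n) / qint q s)
      = (n : ℂ) :=
  epsilon_N_vanishes_general N q hq0 hq n hn

end Stmt14
end
end

section
/- For all integers N ≥ 2 and 1 ≤ r ≤ N: Σ_{s=1}^{r} (−1)^{s−1} · C(N, r−s) · s = C(N−2, r−1), where C(a,b) denotes the binomial coefficient (with C(a,b) = 0 for b > a). -/
open scoped BigOperators

namespace Stmt16

private def a (N r : ℕ) : ℤ := ∑ i ∈ Finset.range r, (-1 : ℤ) ^ i * (N.choose (r - 1 - i) : ℤ)

private def g (N r : ℕ) : ℤ :=
  ∑ i ∈ Finset.range r, (-1 : ℤ) ^ i * (N.choose (r - 1 - i) : ℤ) * ((i : ℤ) + 1)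

private lemma a_succ (N r : ℕ) : a N (r + 1) = (N.choose r : ℤ) - a N r := by
  unfold a
  rw [Finset.sum_range_succ']
  have h : ∀ i ∈ Finset.range r,
      (-1 : ℤ) ^ (i + 1) * (N.choose (r + 1 - 1 - (i + 1)) : ℤ)
        = -((-1 : ℤ) ^ i * (N.choose (r - 1 - i) : ℤ)) := by
    intro i _
    have : r + 1 - 1 - (i + 1) = r - 1 - i := by omega
    rw [this]; ring
  rw [Finset.sum_congr rfl h, Finset.sum_neg_distrib]
  norm_num
  ring

private lemma g_succ (N r : ℕ) : g N (r + 1) = (N.choose r : ℤ) - g N r - a N r := by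
  unfold g a
  rw [Finset.sum_range_succ']
  have h : ∀ i ∈ Finset.range r,
      (-1 : ℤ) ^ (i + 1) * (N.choose (r + 1 - 1 - (i + 1)) : ℤ) * (((i : ℕ) + 1 : ℕ) + 1 : ℤ)
        = -((-1 : ℤ) ^ i * (N.choose (r - 1 - i) : ℤ) * ((i : ℤ) + 1)
            + (-1 : ℤ) ^ i * (N.choose (r - 1 - i) : ℤ)) := by
    intro i _
    have : r + 1 - 1 - (i + 1) = r - 1 - i := by omega
    rw [this]; push_cast; ring
  rw [Finset.sum_congr rfl h, Finset.sum_neg_distrib, Finset.sum_add_distrib]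
  norm_num
  ring

private lemma a_eq (n : ℕ) : ∀ r, a (n + 1) (r + 1) = (n.choose r : ℤ) := by
  intro r
  induction r with
  | zero => simp [a]
  | succ r ih =>
      rw [a_succ, ih]
      have : (n + 1).choose (r + 1) = n.choose r + n.choose (r + 1) :=
        Nat.succ_sub_one (n.choose r) ▸ Nat.choose_succ_succ n r
      rw [this]; push_cast; ring

private lemma g_eq (n : ℕ) : ∀ r, g (n + 2) (r + 1) = (n.choose r : ℤ) := by
  intro r
  induction r with
  | zero => simp [g]
  | succ r ih =>
      rw [g_succ, ih, a_eq]
      have h1 : (n + 2).choose (r + 1) = (n + 1).choose r + (n + 1).choose (r + 1) :=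
        Nat.choose_succ_succ (n + 1) r
      have h2 : (n + 1).choose (r + 1) = n.choose r + n.choose (r + 1) :=
        Nat.choose_succ_succ n r
      rw [h1, h2]; push_cast; ring

/-- For `N ≥ 2` and `1 ≤ r ≤ N`:
`Σ_{s=1}^{r} (−1)^{s−1}·C(N, r−s)·s = C(N−2, r−1)`. -/
theorem alternating_binomial_sum (N r : ℕ) (hN : 2 ≤ N) (hr1 : 1 ≤ r) (hrN : r ≤ N) :
    ∑ s ∈ Finset.Icc 1 r, (-1 : ℤ) ^ (s - 1) * (N.choose (r - s) : ℤ) * (s : ℤ)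
      = ((N - 2).choose (r - 1) : ℤ) := by
  obtain ⟨n, rfl⟩ : ∃ n, N = n + 2 := ⟨N - 2, by omega⟩
  obtain ⟨t, rfl⟩ : ∃ t, r = t + 1 := ⟨r - 1, by omega⟩
  have key := g_eq n t
  unfold g at key
  rw [← Finset.Ico_add_one_right_eq_Icc, Finset.sum_Ico_eq_sum_range]
  simp only [Nat.add_sub_cancel] at key ⊢
  rw [← key]
  apply Finset.sum_congr rfl
  intro i _
  have h1 : 1 + i - 1 = i := by omega
  have h2 : t + 1 - (1 + i) = t - i := by omega
  have h3 : t - i = t - i := rfl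
  rw [h1, h2]
  push_cast
  ring

end Stmt16
end

section
/- Let N ≥ 1, 0 ≤ r ≤ N, let t ∈ ℂ satisfy t^i ≠ 1 for all 1 ≤ i ≤ r, and let z_1,…,z_N ∈ ℂ be pairwise distinct. Then Σ_{J ⊆ {1,…,N}, #J = r} ∏_{j∈J} ∏_{k∉J} (t·z_j − z_k)/(z_j − z_k) = ∏_{i=1}^{r} (t^{N−r+i} − 1)/(t^i − 1); in particular the left-hand side is independent of z_1,…,z_N and equals the Gaussian binomial coefficient. -/
/-!
Write `S_r(s)` for the left-hand side with the index set replaced by a finite set `s`. Fix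
`a ∉ s` and regard `S_{r+1}(s ∪ {a})` as a function of `w = z a`. Multiplied by
`∏_{k ∈ s} (w - z k)` it becomes a polynomial in `w` of degree at most `#s`. This polynomial
vanishes at each `w = z b` with `b ∈ s`: there the term of `J = K ∪ {b}` cancels the term of `K`,
and all other terms vanish. It is therefore a constant multiple of `∏_{k ∈ s} (w - z k)`, and
comparing leading coefficients gives the `q`-Pascal rule
`S_{r+1}(s ∪ {a}) = S_{r+1}(s) + t ^ (#s - r) * S_r(s)`. So `S_r(s)` is the Gaussian binomial
coefficient, which equals the quotient of products as soon as its denominators `t ^ i - 1` are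
nonzero.
-/

open Finset Polynomial

namespace Stmt19

section QBinomial

variable {R : Type*} [CommRing R]

def qBinomial (t : R) : ℕ → ℕ → R
  | _, 0 => 1
  | 0, _ + 1 => 0
  | n + 1, r + 1 => qBinomial t n (r + 1) + t ^ (n - r) * qBinomial t n r

theorem qBinomial_mul_prod_range (t : R) (n r : ℕ) :
    qBinomial t n r * ∏ i ∈ range r, (t ^ (i + 1) - 1) =
      ∏ i ∈ range r, (t ^ (n - i) - 1) := by
  induction n generalizing r with
  | zero => cases r <;> simp [qBinomial, prod_range_succ']
  | succ n ih =>
    cases r with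
    | zero => simp [qBinomial]
    | succ r =>
      have hpow : (∏ i ∈ range r, (t ^ (n - i) - 1)) * (t ^ (n - r) * t ^ (r + 1)) =
          (∏ i ∈ range r, (t ^ (n - i) - 1)) * t ^ (n + 1) := by
        rcases le_or_gt r n with h | h
        · rw [← pow_add, show n - r + (r + 1) = n + 1 by omega]
        · rw [prod_eq_zero (mem_range.2 h) (by simp), zero_mul, zero_mul]
      have ih' := ih (r + 1)
      rw [prod_range_succ, prod_range_succ] at ih'
      rw [qBinomial, prod_range_succ, prod_range_succ']
      simp only [Nat.add_sub_add_right, Nat.sub_zero]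
      linear_combination ih' + t ^ (n - r) * (t ^ (r + 1) - 1) * ih r + hpow

end QBinomial

theorem qBinomial_eq_prod_div {F : Type*} [Field F] {t : F} {n r : ℕ} (hr : r ≤ n)
    (ht : ∀ i, 1 ≤ i → i ≤ r → t ^ i ≠ 1) :
    qBinomial t n r = ∏ i ∈ Icc 1 r, (t ^ (n - r + i) - 1) / (t ^ i - 1) := by
  have hnum : ∏ i ∈ Icc 1 r, (t ^ (n - r + i) - 1) = ∏ i ∈ range r, (t ^ (n - i) - 1) :=
    prod_nbij' (r - ·) (r - ·) (by intro i hi; simp at hi ⊢; omega)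
      (by intro i hi; simp at hi ⊢; omega) (by intro i hi; simp at hi; omega)
      (by intro i hi; simp at hi; omega) (by intro i hi; simp at hi; congr 2; omega)
  have hden : ∏ i ∈ Icc 1 r, (t ^ i - 1) = ∏ i ∈ range r, (t ^ (i + 1) - 1) :=
    prod_nbij' (· - 1) (· + 1) (by intro i hi; simp at hi ⊢; omega)
      (by intro i hi; simp at hi ⊢; omega) (by intro i hi; simp at hi; omega)
      (by intro i hi; simp at hi; omega) (by intro i hi; simp at hi; congr 2; omega)
  have hden_ne : ∏ i ∈ range r, (t ^ (i + 1) - 1) ≠ 0 :=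
    prod_ne_zero_iff.2 fun i hi => sub_ne_zero.2 (ht _ (by omega) (by simp at hi; omega))
  rw [prod_div_distrib, hnum, hden, eq_div_iff hden_ne, qBinomial_mul_prod_range]

section PowersetCard

variable {α M : Type*} [DecidableEq α] [AddCommMonoid M]

theorem sum_powersetCard_succ_insert {a : α} {s : Finset α} (ha : a ∉ s) (r : ℕ)
    (f : Finset α → M) :
    ∑ J ∈ powersetCard (r + 1) (insert a s), f J =
      ∑ J ∈ powersetCard (r + 1) s, f J + ∑ K ∈ powersetCard r s, f (insert a K) := by
  have hinj : Set.InjOn (insert a) (powersetCard r s : Set (Finset α)) := by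
    intro K hK L hL h
    have hK' : a ∉ K := fun h' => ha ((mem_powersetCard.1 hK).1 h')
    have hL' : a ∉ L := fun h' => ha ((mem_powersetCard.1 hL).1 h')
    rw [← erase_insert hK', h, erase_insert hL']
  have hdisj : Disjoint (powersetCard (r + 1) s) ((powersetCard r s).image (insert a)) := by
    simp only [disjoint_left, mem_image, not_exists, not_and]
    rintro J hJ K - rfl
    exact ha ((mem_powersetCard.1 hJ).1 (mem_insert_self a K))
  rw [powersetCard_succ_insert ha, sum_union hdisj, sum_image hinj]

end PowersetCard

section Polynomial

variable {R ι : Type*} [CommSemiring R]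

theorem natDegree_prod_le_card {s : Finset ι} {f : ι → R[X]}
    (hf : ∀ i, (f i).natDegree ≤ 1) : (∏ i ∈ s, f i).natDegree ≤ #s :=
  (natDegree_prod_le _ _).trans <| by simpa using sum_le_card_nsmul s _ 1 fun i _ => hf i

theorem coeff_card_prod {s : Finset ι} {f : ι → R[X]} (hf : ∀ i, (f i).natDegree ≤ 1) :
    (∏ i ∈ s, f i).coeff #s = ∏ i ∈ s, (f i).coeff 1 := by
  simpa using coeff_prod_of_natDegree_le s f 1 fun i _ => hf i

variable [DecidableEq ι] {s J : Finset ι} {f g : ι → R[X]}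

theorem natDegree_prod_mul_prod_sdiff_le (hJ : J ⊆ s) (hf : ∀ i, (f i).natDegree ≤ 1)
    (hg : ∀ i, (g i).natDegree ≤ 1) :
    ((∏ i ∈ J, f i) * ∏ i ∈ s \ J, g i).natDegree ≤ #s := by
  rw [← card_sdiff_add_card_eq_card hJ, add_comm]
  exact natDegree_mul_le.trans
    (add_le_add (natDegree_prod_le_card hf) (natDegree_prod_le_card hg))

theorem coeff_prod_mul_prod_sdiff (hJ : J ⊆ s) (hf : ∀ i, (f i).natDegree ≤ 1)
    (hg : ∀ i, (g i).natDegree ≤ 1) :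
    ((∏ i ∈ J, f i) * ∏ i ∈ s \ J, g i).coeff #s =
      (∏ i ∈ J, (f i).coeff 1) * ∏ i ∈ s \ J, (g i).coeff 1 := by
  rw [← card_sdiff_add_card_eq_card hJ, add_comm,
    coeff_mul_add_eq_of_natDegree_le (natDegree_prod_le_card hf) (natDegree_prod_le_card hg),
    coeff_card_prod hf, coeff_card_prod hg]

end Polynomial

theorem natDegree_C_mul_X_sub_C_le {R : Type*} [Ring R] (a b : R) :
    (C a * X - C b).natDegree ≤ 1 := by
  rw [sub_eq_add_neg, ← C_neg]
  exact natDegree_linear_le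

theorem eq_C_mul_prod_X_sub_C_of_eval_eq_zero {R ι : Type*} [CommRing R] [IsDomain R]
    {s : Finset ι} {p : R[X]} {v : ι → R} (hv : Set.InjOn v s) (hp : p.natDegree ≤ #s)
    (hroot : ∀ i ∈ s, p.eval (v i) = 0) :
    p = C (p.coeff #s) * ∏ i ∈ s, (X - C (v i)) := by
  have hmonic : (∏ i ∈ s, (X - C (v i))).Monic :=
    monic_prod_of_monic _ _ fun i _ => monic_X_sub_C _
  have hdeg : (∏ i ∈ s, (X - C (v i))).natDegree = #s := by
    simp [natDegree_prod_of_monic _ _ fun i _ => monic_X_sub_C (v i)]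
  refine eq_of_degree_sub_lt_of_eval_index_eq s hv
    ((degree_lt_iff_coeff_zero _ _).2 fun m hm => ?_) fun i hi => by
      simp [hroot i hi, eval_prod, prod_eq_zero hi]
  rw [coeff_sub, coeff_C_mul]
  rcases hm.eq_or_lt with rfl | hlt
  · rw [← hdeg, hmonic.coeff_natDegree, hdeg, mul_one, sub_self]
  · rw [coeff_eq_zero_of_natDegree_lt (hp.trans_lt hlt),
      coeff_eq_zero_of_natDegree_lt (hdeg.trans_lt hlt), mul_zero, sub_zero]

section Weight

variable {F ι : Type*} [Field F] {t : F} {z : ι → F}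

theorem prod_div_mul_prod_sub_left {S : Finset ι} {w : F} (hw : ∀ k ∈ S, z k ≠ w) :
    (∏ k ∈ S, (t * w - z k) / (w - z k)) * ∏ k ∈ S, (w - z k) = ∏ k ∈ S, (t * w - z k) := by
  rw [prod_div_distrib, div_mul_cancel₀]
  exact prod_ne_zero_iff.2 fun k hk => sub_ne_zero.2 (hw k hk).symm

theorem prod_div_mul_prod_sub_right {S : Finset ι} {w : F} (hw : ∀ j ∈ S, z j ≠ w) :
    (∏ j ∈ S, (t * z j - w) / (z j - w)) * ∏ j ∈ S, (w - z j) = ∏ j ∈ S, (w - t * z j) := by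
  rw [← prod_mul_distrib]
  refine prod_congr rfl fun j hj => ?_
  rw [← neg_sub (z j), mul_neg, div_mul_cancel₀ _ (sub_ne_zero.2 (hw j hj)), neg_sub]

variable [DecidableEq ι]

variable (t z) in
def weight (s J : Finset ι) : F :=
  ∏ j ∈ J, ∏ k ∈ s \ J, (t * z j - z k) / (z j - z k)

variable (t z) in
def weightSum (s : Finset ι) (r : ℕ) : F :=
  ∑ J ∈ powersetCard r s, weight t z s J

theorem weight_insert {a : ι} {s J : Finset ι} (has : a ∉ s) (haJ : a ∉ J) :
    weight t z (insert a s) J = weight t z s J * ∏ j ∈ J, (t * z j - z a) / (z j - z a) := by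
  have ha : a ∉ s \ J := fun h => has (mem_sdiff.1 h).1
  simp only [weight, insert_sdiff_of_notMem _ haJ, prod_insert ha, prod_mul_distrib, mul_comm]

theorem weight_insert_insert {a : ι} {s K : Finset ι} (has : a ∉ s) (haK : a ∉ K) :
    weight t z (insert a s) (insert a K) =
      (∏ k ∈ s \ K, (t * z a - z k) / (z a - z k)) * weight t z s K := by
  rw [weight, insert_sdiff_insert, sdiff_insert_of_notMem has, prod_insert haK, weight]

variable (t z) in
/-- At `w = z a` with `a ∉ s`, this evaluates to `weightSum t z (insert a s) (r + 1)` times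
`∏ k ∈ s, (w - z k)` (`weightSum_insert_mul_prod`); the `J` and `K` sums come from the subsets
of `insert a s` without and with `a`. -/
noncomputable def numeratorPoly (s : Finset ι) (r : ℕ) : F[X] :=
  (∑ J ∈ powersetCard (r + 1) s,
      C (weight t z s J) * ((∏ j ∈ J, (X - C (t * z j))) * ∏ k ∈ s \ J, (X - C (z k)))) +
    ∑ K ∈ powersetCard r s,
      C (weight t z s K) * ((∏ j ∈ K, (X - C (z j))) * ∏ k ∈ s \ K, (C t * X - C (z k)))

theorem eval_numeratorPoly (s : Finset ι) (r : ℕ) (w : F) :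
    (numeratorPoly t z s r).eval w =
      ∑ J ∈ powersetCard (r + 1) s,
          weight t z s J * ((∏ j ∈ J, (w - t * z j)) * ∏ k ∈ s \ J, (w - z k)) +
        ∑ K ∈ powersetCard r s,
          weight t z s K * ((∏ j ∈ K, (w - z j)) * ∏ k ∈ s \ K, (t * w - z k)) := by
  simp [numeratorPoly, eval_finsetSum, eval_prod]

theorem natDegree_numeratorPoly_le (s : Finset ι) (r : ℕ) :
    (numeratorPoly t z s r).natDegree ≤ #s := by
  refine (natDegree_add_le _ _).trans (max_le ?_ ?_)
  · refine natDegree_sum_le_of_forall_le _ _ fun J hJ => (natDegree_C_mul_le _ _).trans ?_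
    exact natDegree_prod_mul_prod_sdiff_le (mem_powersetCard.1 hJ).1
      (fun _ => natDegree_X_sub_C_le _) (fun _ => natDegree_X_sub_C_le _)
  · refine natDegree_sum_le_of_forall_le _ _ fun K hK => (natDegree_C_mul_le _ _).trans ?_
    exact natDegree_prod_mul_prod_sdiff_le (mem_powersetCard.1 hK).1
      (fun _ => natDegree_X_sub_C_le _) (fun _ => natDegree_C_mul_X_sub_C_le _ _)

theorem coeff_numeratorPoly (s : Finset ι) (r : ℕ) :
    (numeratorPoly t z s r).coeff #s =
      weightSum t z s (r + 1) + t ^ (#s - r) * weightSum t z s r := by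
  simp only [numeratorPoly, coeff_add, finsetSum_coeff, coeff_C_mul]
  rw [weightSum, weightSum, mul_sum]
  congr 1
  · refine sum_congr rfl fun J hJ => ?_
    rw [coeff_prod_mul_prod_sdiff (mem_powersetCard.1 hJ).1
      (fun j => natDegree_X_sub_C_le (t * z j)) (fun k => natDegree_X_sub_C_le (z k))]
    simp
  · refine sum_congr rfl fun K hK => ?_
    obtain ⟨hKs, hKr⟩ := mem_powersetCard.1 hK
    rw [coeff_prod_mul_prod_sdiff hKs
      (fun j => natDegree_X_sub_C_le (z j)) (fun k => natDegree_C_mul_X_sub_C_le t (z k))]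
    simp only [coeff_sub, coeff_X_one, coeff_C_mul_X, coeff_C, one_ne_zero, if_true, if_false,
      sub_zero, prod_const_one, prod_const, card_sdiff_of_subset hKs, hKr]
    ring

theorem residue_terms_cancel {b : ι} {s K : Finset ι} (hb : b ∉ s) (hK : K ⊆ s)
    (hzb : ∀ k ∈ s, z k ≠ z b) :
    weight t z (insert b s) (insert b K) *
        ((∏ j ∈ insert b K, (z b - t * z j)) * ∏ k ∈ insert b s \ insert b K, (z b - z k)) +
      weight t z (insert b s) K *
        ((∏ j ∈ K, (z b - z j)) * ∏ k ∈ insert b s \ K, (t * z b - z k)) = 0 := by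
  have hbK : b ∉ K := fun h => hb (hK h)
  have hbsK : b ∉ s \ K := fun h => hb (mem_sdiff.1 h).1
  have hleft := prod_div_mul_prod_sub_left (t := t) (S := s \ K) fun k hk =>
    hzb k (mem_sdiff.1 hk).1
  have hright := prod_div_mul_prod_sub_right (t := t) fun j hj => hzb j (hK hj)
  rw [weight_insert_insert hb hbK, weight_insert hb hbK, insert_sdiff_insert,
    sdiff_insert_of_notMem hb, insert_sdiff_of_notMem _ hbK, prod_insert hbK, prod_insert hbsK]
  linear_combination
    (weight t z s K * (z b - t * z b) * ∏ j ∈ K, (z b - t * z j)) * hleft +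
      (weight t z s K * (t * z b - z b) * ∏ k ∈ s \ K, (t * z b - z k)) * hright

theorem eval_numeratorPoly_insert_eq_zero {b : ι} {s : Finset ι} (hb : b ∉ s)
    (hzb : ∀ k ∈ s, z k ≠ z b) (r : ℕ) :
    (numeratorPoly t z (insert b s) r).eval (z b) = 0 := by
  have hvanish_left : ∀ J ∈ powersetCard (r + 1) s, weight t z (insert b s) J *
      ((∏ j ∈ J, (z b - t * z j)) * ∏ k ∈ insert b s \ J, (z b - z k)) = 0 := fun J hJ => by
    have hbJ : b ∈ insert b s \ J :=
      mem_sdiff.2 ⟨mem_insert_self b s, fun h => hb ((mem_powersetCard.1 hJ).1 h)⟩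
    rw [prod_eq_zero hbJ (sub_self _), mul_zero, mul_zero]
  have hvanish_right : ∀ K ∈ powersetCard r (insert b s), K ∉ powersetCard r s →
      weight t z (insert b s) K *
        ((∏ j ∈ K, (z b - z j)) * ∏ k ∈ insert b s \ K, (t * z b - z k)) = 0 := fun K hK hK' => by
    obtain ⟨hKs, hKr⟩ := mem_powersetCard.1 hK
    have hbK : b ∈ K := by
      by_contra hbK
      exact hK' (mem_powersetCard.2 ⟨(subset_insert_iff_of_notMem hbK).1 hKs, hKr⟩)
    rw [prod_eq_zero hbK (sub_self _), zero_mul, mul_zero]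
  rw [eval_numeratorPoly, sum_powersetCard_succ_insert hb, sum_eq_zero hvanish_left, zero_add,
    ← sum_subset (powersetCard_mono (subset_insert b s)) hvanish_right, ← sum_add_distrib]
  exact sum_eq_zero fun K hK => residue_terms_cancel hb (mem_powersetCard.1 hK).1 hzb

theorem weightSum_insert_mul_prod {a : ι} {s : Finset ι} (ha : a ∉ s)
    (hza : ∀ k ∈ s, z k ≠ z a) (r : ℕ) :
    weightSum t z (insert a s) (r + 1) * ∏ k ∈ s, (z a - z k) =
      (numeratorPoly t z s r).eval (z a) := by
  rw [weightSum, sum_powersetCard_succ_insert ha, add_mul, sum_mul, sum_mul, eval_numeratorPoly]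
  congr 1 <;> refine sum_congr rfl fun J hJ => ?_
  · have hJs := (mem_powersetCard.1 hJ).1
    rw [weight_insert ha (fun h => ha (hJs h)), ← prod_sdiff hJs,
      ← prod_div_mul_prod_sub_right fun j hj => hza j (hJs hj)]
    ring
  · have hJs := (mem_powersetCard.1 hJ).1
    rw [weight_insert_insert ha (fun h => ha (hJs h)), ← prod_sdiff hJs,
      ← prod_div_mul_prod_sub_left fun k hk => hza k (mem_sdiff.1 hk).1]
    ring

theorem weightSum_insert {a : ι} {s : Finset ι} (ha : a ∉ s) (hz : Set.InjOn z ↑(insert a s))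
    (r : ℕ) :
    weightSum t z (insert a s) (r + 1) =
      weightSum t z s (r + 1) + t ^ (#s - r) * weightSum t z s r := by
  have hzs : Set.InjOn z s := hz.mono (by simp)
  have hza : ∀ k ∈ s, z k ≠ z a := fun k hk =>
    hz.ne (mem_insert_of_mem hk) (mem_insert_self a s) (ne_of_mem_of_not_mem hk ha)
  have hfactor := eq_C_mul_prod_X_sub_C_of_eval_eq_zero hzs
    (natDegree_numeratorPoly_le (t := t) (z := z) s r) fun b hb => by
      rw [← insert_erase hb]
      exact eval_numeratorPoly_insert_eq_zero (notMem_erase b s)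
        (fun k hk => hzs.ne (mem_of_mem_erase hk) hb (ne_of_mem_erase hk)) r
  have hprod : ∏ k ∈ s, (z a - z k) ≠ 0 :=
    prod_ne_zero_iff.2 fun k hk => sub_ne_zero.2 (hza k hk).symm
  rw [← coeff_numeratorPoly]
  refine mul_right_cancel₀ hprod ?_
  calc weightSum t z (insert a s) (r + 1) * ∏ k ∈ s, (z a - z k)
      = (numeratorPoly t z s r).eval (z a) := weightSum_insert_mul_prod ha hza r
    _ = (numeratorPoly t z s r).coeff #s * ∏ k ∈ s, (z a - z k) := by
      conv_lhs => rw [hfactor]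
      simp [eval_prod]

theorem weightSum_eq_qBinomial {s : Finset ι} (hz : Set.InjOn z s) (r : ℕ) :
    weightSum t z s r = qBinomial t #s r := by
  induction s using Finset.induction_on generalizing r with
  | empty => cases r <;> simp [weightSum, weight, qBinomial]
  | insert a s ha ih =>
    have hzs : Set.InjOn z s := hz.mono (by simp)
    cases r with
    | zero => simp [weightSum, weight, qBinomial]
    | succ r =>
      rw [weightSum_insert ha hz, ih hzs, ih hzs, card_insert_of_notMem ha, qBinomial]

end Weight

/-- For pairwise distinct `z_1, …, z_N` and `t^i ≠ 1` for `1 ≤ i ≤ r ≤ N`: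
`Σ_{#J = r} ∏_{j∈J}∏_{k∉J} (t·z_j − z_k)/(z_j − z_k) = ∏_{i=1}^{r} (t^{N−r+i} − 1)/(t^i − 1)`;
in particular the left-hand side is independent of the `z_j` and equals the Gaussian binomial
coefficient. -/
theorem sum_AJ_eq_gaussian_binomial (N r : ℕ) (hr : r ≤ N) (t : ℂ)
    (ht : ∀ i, 1 ≤ i → i ≤ r → t ^ i ≠ 1)
    (z : Fin N → ℂ) (hz : Function.Injective z) :
    ∑ J ∈ Finset.powersetCard r (Finset.univ : Finset (Fin N)),
        ∏ j ∈ J, ∏ k ∈ Jᶜ, (t * z j - z k) / (z j - z k)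
      = ∏ i ∈ Finset.Icc 1 r, (t ^ (N - r + i) - 1) / (t ^ i - 1) := by
  have hsum : ∑ J ∈ powersetCard r univ, ∏ j ∈ J, ∏ k ∈ Jᶜ, (t * z j - z k) / (z j - z k) =
      weightSum t z univ r := by
    simp only [weightSum, weight, compl_eq_univ_sdiff]
  rw [hsum, weightSum_eq_qBinomial hz.injOn, card_univ, Fintype.card_fin,
    qBinomial_eq_prod_div hr ht]

end Stmt19
end
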